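/- Let A and B be commuting contractions on a finite-dimensional Hilbert space H. Suppose U is a unitary N-dilation of A on a finite-dimensional space K, and there exists a contraction V on K commuting with U such that the pair (U, V) is an N-dilation of (A, B), i.e., A^{n_1} B^{n_2} = P_H U^{n_1} V^{n_2} P_H whenever n_1 + n_2 ≤ N. Then the pair (A, B) has a unitary N-dilation on a finite-dimensional space (i.e., there exist commuting unitaries on a finite-dimensional space K' ⊇ H dilating all products A^{n_1}B^{n_2} with n_1+n_2 ≤ N). -/

import Mathlib

/-!
By Fuglede's theorem `V` also commutes with `U⋆`, hence with the defect operators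
`D_V = (1 - V⋆V)^{1/2}` and `D_{V⋆}`. Egerváry's construction turns the contraction `V` into a
unitary `V'` on `K^{N+2}` whose powers up to `N + 1`, compressed to the first copy of `K`, are the
powers of `V`; its entries are `V`, `D_V`, `D_{V⋆}`, `-V⋆` and identities, all commuting with `U`,
so `V'` commutes with the unitary `U' = U ⊕ ⋯ ⊕ U`. Compressing `U'^{n₁} V'^{n₂}` to the first
copy gives `U^{n₁} V^{n₂}`, which compresses further to `A^{n₁} B^{n₂}` on `H`.
-/

open ContinuousLinearMap Filter Polynomial Set Topology
open scoped InnerProductSpace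

theorem Polynomial.exists_seq_tendstoUniformlyOn {s : Set ℝ} (hs : IsCompact s) {f : ℝ → ℝ}
    (hf : Continuous f) :
    ∃ p : ℕ → ℝ[X], TendstoUniformlyOn (fun n t ↦ (p n).eval t) f atTop s := by
  obtain ⟨r, hr⟩ := (Metric.isBounded_iff_subset_closedBall 0).mp hs.isBounded
  rw [Real.closedBall_eq_Icc] at hr
  choose p hp using fun n : ℕ ↦ exists_polynomial_near_of_continuousOn (0 - r) (0 + r) f
    hf.continuousOn (1 / (n + 1)) Nat.one_div_pos_of_nat
  refine ⟨p, Metric.tendstoUniformlyOn_iff.mpr fun ε hε ↦ ?_⟩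
  filter_upwards [tendsto_one_div_add_atTop_nhds_zero_nat.eventually (gt_mem_nhds hε)]
    with n hn t ht
  rw [Real.dist_eq, abs_sub_comm]
  exact (hp n t (hr ht)).trans hn

section CStarAlgebra

variable {A : Type*} [CStarAlgebra A]

theorem SemiconjBy.aeval {x a b : A} (h : SemiconjBy x a b) (p : ℝ[X]) :
    SemiconjBy x (aeval a p) (aeval b p) := by
  induction p using Polynomial.induction_on' with
  | add p q hp hq => simpa only [map_add] using hp.add_right hq
  | monomial n r =>
    simpa only [aeval_monomial] using
      (Algebra.commute_algebraMap_right r x).semiconjBy.mul_right (h.pow_right n)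

/-- Polynomials approximate `f` uniformly on both spectra, and `cfc` is continuous for uniform
convergence on the spectrum. -/
theorem SemiconjBy.cfc_real {x a b : A} (ha : IsSelfAdjoint a) (hb : IsSelfAdjoint b)
    (h : SemiconjBy x a b) {f : ℝ → ℝ} (hf : Continuous f) :
    SemiconjBy x (cfc f a) (cfc f b) := by
  obtain ⟨p, hp⟩ := Polynomial.exists_seq_tendstoUniformlyOn
    ((ContinuousFunctionalCalculus.isCompact_spectrum a).union
      (ContinuousFunctionalCalculus.isCompact_spectrum b)) hf
  have approx : ∀ c : A, IsSelfAdjoint c → spectrum ℝ c ⊆ spectrum ℝ a ∪ spectrum ℝ b →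
      Tendsto (fun n ↦ Polynomial.aeval c (p n)) atTop (𝓝 (cfc f c)) := by
    intro c hc hsub
    simp_rw [← cfc_polynomial _ c]
    exact tendsto_cfc_fun (hp.mono hsub) (.of_forall fun n ↦ (p n).continuousOn_aeval)
  have lim_a := (approx a ha subset_union_left).const_mul x
  have lim_b := (approx b hb subset_union_right).mul_const x
  simp_rw [fun n ↦ (h.aeval (p n)).eq] at lim_a
  exact tendsto_nhds_unique lim_a lim_b

variable [PartialOrder A] [StarOrderedRing A]

noncomputable def defect (v : A) : A := CFC.sqrt (1 - star v * v)

lemma isSelfAdjoint_defect (v : A) : IsSelfAdjoint (defect v) :=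
  (CFC.sqrt_nonneg _).isSelfAdjoint

lemma Commute.defect {u v : A} (h : Commute u v) (h' : Commute u (star v)) :
    Commute u (defect v) := by
  rw [_root_.defect, CFC.sqrt_eq_cfc]
  exact ((Commute.one_right u).sub_right (h'.mul_right h)).symm.cfc_nnreal _ |>.symm

variable {v : A} (hv : ‖v‖ ≤ 1)
include hv

lemma one_sub_star_mul_self_nonneg : 0 ≤ 1 - star v * v := by
  rw [sub_nonneg, ← CStarAlgebra.norm_le_one_iff_of_nonneg _ (star_mul_self_nonneg v),
    CStarRing.norm_star_mul_self]
  exact mul_le_one₀ hv (norm_nonneg v) hv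

lemma star_mul_self_add_defect_mul_defect : star v * v + defect v * defect v = 1 := by
  rw [defect, CFC.sqrt_mul_sqrt_self _ (one_sub_star_mul_self_nonneg hv), add_sub_cancel]

lemma mul_defect : v * defect v = defect (star v) * v := by
  have hv' : ‖star v‖ ≤ 1 := by rwa [norm_star]
  have h : SemiconjBy v (1 - star v * v) (1 - star (star v) * star v) := by
    simp only [SemiconjBy, star_star, mul_sub, sub_mul, mul_one, one_mul, mul_assoc]
  rw [defect, defect, CFC.sqrt_eq_real_sqrt _ (one_sub_star_mul_self_nonneg hv),
    CFC.sqrt_eq_real_sqrt _ (one_sub_star_mul_self_nonneg hv'), cfcₙ_eq_cfc, cfcₙ_eq_cfc]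
  exact h.cfc_real (.sub (.one _) (.star_mul_self v)) (.sub (.one _) (.star_mul_self _))
    Real.continuous_sqrt

end CStarAlgebra

theorem mem_unitary_of_forall_norm_map {E : Type*} [NormedAddCommGroup E]
    [InnerProductSpace ℂ E] [FiniteDimensional ℂ E] {T : E →L[ℂ] E} (hT : ∀ x, ‖T x‖ = ‖x‖) :
    T ∈ unitary (E →L[ℂ] E) :=
  (Unitary.linearIsometryEquiv.symm
    (LinearIsometry.toLinearIsometryEquiv ⟨T.toLinearMap, hT⟩ rfl)).property

section Dilation

variable {K : Type*} [NormedAddCommGroup K] [InnerProductSpace ℂ K]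

section Blocks

variable {ι : Type*}

noncomputable def ofRows (r : ι → (PiLp 2 (fun _ : ι ↦ K) →L[ℂ] K)) :
    PiLp 2 (fun _ : ι ↦ K) →L[ℂ] PiLp 2 (fun _ : ι ↦ K) :=
  (PiLp.continuousLinearEquiv 2 ℂ _).symm.toContinuousLinearMap ∘L ContinuousLinearMap.pi r

noncomputable def ampliation (T : K →L[ℂ] K) :
    PiLp 2 (fun _ : ι ↦ K) →L[ℂ] PiLp 2 (fun _ : ι ↦ K) :=
  ofRows fun i ↦ T ∘L PiLp.proj 2 _ i

@[simp]
lemma ampliation_apply (T : K →L[ℂ] K) (x : PiLp 2 (fun _ : ι ↦ K)) (i : ι) :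
    ampliation T x i = T (x i) := rfl

lemma ampliation_pow_apply (T : K →L[ℂ] K) (m : ℕ) (x : PiLp 2 (fun _ : ι ↦ K)) (i : ι) :
    (ampliation T ^ m) x i = (T ^ m) (x i) := by
  induction m generalizing x with
  | zero => rfl
  | succ m ih =>
    rw [pow_succ, mul_apply_eq_comp, ih, ampliation_apply, ← mul_apply_eq_comp, ← pow_succ]

variable [Fintype ι]

lemma ampliation_mem_unitary [FiniteDimensional ℂ K] {U : K →L[ℂ] K}
    (hU : U ∈ unitary (K →L[ℂ] K)) : ampliation (ι := ι) U ∈ unitary _ :=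
  mem_unitary_of_forall_norm_map fun x ↦ by
    simp only [PiLp.norm_eq_of_L2, ampliation_apply, norm_map_of_mem_unitary hU]

variable [DecidableEq ι]

def singleIsometry (i : ι) : K →ₗᵢ[ℂ] PiLp 2 (fun _ : ι ↦ K) where
  toFun := PiLp.single 2 (β := fun _ ↦ K) i
  map_add' _ _ := PiLp.single_add 2 i
  map_smul' _ _ := by ext j; by_cases h : j = i <;> simp [h]
  norm_map' := PiLp.norm_single 2 (fun _ ↦ K) i

lemma singleIsometry_apply (i : ι) (k : K) : singleIsometry i k = PiLp.single 2 i k := rfl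

lemma adjoint_singleIsometry_apply [CompleteSpace K] (i : ι) (x : PiLp 2 (fun _ : ι ↦ K)) :
    adjoint (singleIsometry i).toContinuousLinearMap x = x i := by
  refine ext_inner_right ℂ fun k ↦ ?_
  rw [adjoint_inner_left, PiLp.inner_apply]
  simp [singleIsometry, apply_ite]

end Blocks

variable [CompleteSpace K]

/-- The Halmos block matrix `[[v, q], [p, -v⋆]]` is an isometry of `K ⊕ K`. -/
theorem norm_add_sq_add_norm_sub_sq_of_defects {v p q : K →L[ℂ] K}
    (hp : IsSelfAdjoint p) (hq : IsSelfAdjoint q) (hvp : star v * v + p * p = 1)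
    (hvq : v * star v + q * q = 1) (hpq : v * p = q * v) (a b : K) :
    ‖v a + q b‖ ^ 2 + ‖p a - star v b‖ ^ 2 = ‖a‖ ^ 2 + ‖b‖ ^ 2 := by
  rw [star_eq_adjoint] at hvp hvq ⊢
  have norm_sq_add {s t : K →L[ℂ] K} (h : adjoint s * s + adjoint t * t = 1) (x : K) :
      ‖s x‖ ^ 2 + ‖t x‖ ^ 2 = ‖x‖ ^ 2 := by
    rw [apply_norm_sq_eq_inner_adjoint_left, apply_norm_sq_eq_inner_adjoint_left, ← map_add,
      ← inner_add_left, ← add_apply, ← mul_def, ← mul_def, h, one_apply_eq_self,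
      inner_self_eq_norm_sq (𝕜 := ℂ)]
  have ha := norm_sq_add (s := v) (t := p) (by rwa [hp.adjoint_eq]) a
  have hb := norm_sq_add (s := q) (t := adjoint v)
    (by rwa [hq.adjoint_eq, adjoint_adjoint, add_comm]) b
  have cross : ⟪v a, q b⟫_ℂ = ⟪p a, adjoint v b⟫_ℂ := by
    rw [adjoint_inner_right, ← hq.adjoint_eq, adjoint_inner_right, ← mul_apply_eq_comp,
      ← mul_apply_eq_comp, hpq]
  rw [norm_add_sq (𝕜 := ℂ), norm_sub_sq (𝕜 := ℂ), cross]
  linarith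

/-- Egerváry's block matrix: `v` and `q` in the corners `(0, 0)` and `(0, n + 1)`, `p` and `-v⋆`
at `(1, 0)` and `(1, n + 1)`, and the identity at `(i + 1, i)` for `1 ≤ i ≤ n`. -/
noncomputable def egervary (n : ℕ) (v p q : K →L[ℂ] K) :
    PiLp 2 (fun _ : Fin (n + 2) ↦ K) →L[ℂ] PiLp 2 (fun _ : Fin (n + 2) ↦ K) :=
  ofRows <| Fin.cases (v ∘L PiLp.proj 2 _ 0 + q ∘L PiLp.proj 2 _ (Fin.last _)) <|
    Fin.cases (p ∘L PiLp.proj 2 _ 0 - star v ∘L PiLp.proj 2 _ (Fin.last _))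
      fun j ↦ PiLp.proj 2 _ j.succ.castSucc

section Egervary

variable {n : ℕ} {v p q : K →L[ℂ] K}

@[simp]
lemma egervary_apply_zero (x : PiLp 2 (fun _ : Fin (n + 2) ↦ K)) :
    egervary n v p q x 0 = v (x 0) + q (x (Fin.last _)) := rfl

@[simp]
lemma egervary_apply_one (x : PiLp 2 (fun _ : Fin (n + 2) ↦ K)) :
    egervary n v p q x 1 = p (x 0) - star v (x (Fin.last _)) := rfl

@[simp]
lemma egervary_apply_succ_succ (x : PiLp 2 (fun _ : Fin (n + 2) ↦ K)) (j : Fin n) :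
    egervary n v p q x j.succ.succ = x j.succ.castSucc := rfl

lemma commute_ampliation_egervary {u : K →L[ℂ] K} (hv : Commute u v) (hv' : Commute u (star v))
    (hp : Commute u p) (hq : Commute u q) : Commute (ampliation u) (egervary n v p q) := by
  have comm {a : K →L[ℂ] K} (h : Commute u a) (y : K) : u (a y) = a (u y) := congr($(h.eq) y)
  ext x i
  refine Fin.cases ?_ (Fin.cases ?_ fun j ↦ ?_) i
  · simp [comm hv, comm hq]
  · simp [comm hp, comm hv']
  · simp

lemma egervary_pow_single_zero {m : ℕ} (hm : m ≤ n + 1) (k : K) :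
    (egervary n v p q ^ m) (PiLp.single 2 0 k) 0 = (v ^ m) k ∧
      ∀ j : Fin (n + 2), m < j → (egervary n v p q ^ m) (PiLp.single 2 0 k) j = 0 := by
  induction m with
  | zero => exact ⟨by simp, fun j hj ↦ by simp [Fin.pos_iff_ne_zero.mp hj]⟩
  | succ m ih =>
    obtain ⟨h_zero, h_vanish⟩ := ih (by omega)
    rw [pow_succ', pow_succ']
    refine ⟨?_, fun j hj ↦ ?_⟩
    · rw [mul_apply_eq_comp, egervary_apply_zero, h_zero,
        h_vanish (Fin.last _) (by rw [Fin.val_last]; omega), map_zero, add_zero, mul_apply_eq_comp]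
    · induction j using Fin.cases with
      | zero => simp at hj
      | succ i =>
        induction i using Fin.cases with
        | zero => simp at hj
        | succ i =>
          rw [mul_apply_eq_comp, egervary_apply_succ_succ]
          exact h_vanish _ (by
            simp only [Fin.val_succ, Fin.castSucc_succ, Fin.val_castSucc] at hj ⊢; omega)

variable (hp : IsSelfAdjoint p) (hq : IsSelfAdjoint q)
  (hvp : star v * v + p * p = 1) (hvq : v * star v + q * q = 1) (hpq : v * p = q * v)
include hp hq hvp hvq hpq

lemma norm_egervary_apply (x : PiLp 2 (fun _ : Fin (n + 2) ↦ K)) :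
    ‖egervary n v p q x‖ = ‖x‖ := by
  rw [← sq_eq_sq₀ (norm_nonneg _) (norm_nonneg _), PiLp.norm_sq_eq_of_L2, PiLp.norm_sq_eq_of_L2,
    Fin.sum_univ_succ, Fin.sum_univ_succ, Fin.sum_univ_succ, Fin.sum_univ_castSucc]
  simp only [Fin.succ_zero_eq_one, egervary_apply_zero, egervary_apply_one,
    egervary_apply_succ_succ, Fin.succ_castSucc, Fin.succ_last]
  have := norm_add_sq_add_norm_sub_sq_of_defects hp hq hvp hvq hpq (x 0) (x (Fin.last _))
  linarith

lemma egervary_mem_unitary [FiniteDimensional ℂ K] : egervary n v p q ∈ unitary _ :=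
  mem_unitary_of_forall_norm_map (norm_egervary_apply hp hq hvp hvq hpq)

end Egervary

end Dilation

theorem commutant_lifting_gives_unitary_N_dilation_general
    (H K : Type)
    [NormedAddCommGroup H] [InnerProductSpace ℂ H] [FiniteDimensional ℂ H]
    [NormedAddCommGroup K] [InnerProductSpace ℂ K] [FiniteDimensional ℂ K]
    (A B : H →L[ℂ] H)
    (N : ℕ) (W : H →ₗᵢ[ℂ] K)
    (U : K →L[ℂ] K) (hU : U ∈ unitary (K →L[ℂ] K))
    (V : K →L[ℂ] K) (hV : ‖V‖ ≤ 1) (hUV : Commute U V)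
    (hdil : ∀ n₁ n₂ : ℕ, n₁ + n₂ ≤ N →
      ∀ h : H, adjoint W.toContinuousLinearMap ((U ^ n₁ * V ^ n₂) (W h)) = (A ^ n₁ * B ^ n₂) h) :
    ∃ (K' : Type) (_i1 : NormedAddCommGroup K') (_i2 : InnerProductSpace ℂ K')
      (_i3 : FiniteDimensional ℂ K') (W' : H →ₗᵢ[ℂ] K') (U' V' : K' →L[ℂ] K'),
      U' ∈ unitary (K' →L[ℂ] K') ∧ V' ∈ unitary (K' →L[ℂ] K') ∧ Commute U' V' ∧
      ∀ n₁ n₂ : ℕ, n₁ + n₂ ≤ N →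
        ∀ h : H,
          adjoint W'.toContinuousLinearMap ((U' ^ n₁ * V' ^ n₂) (W' h)) =
            (A ^ n₁ * B ^ n₂) h := by
  have hV' : ‖star V‖ ≤ 1 := by rwa [star_eq_adjoint, LinearIsometryEquiv.norm_map]
  have hUV' : Commute U (star V) := by
    simpa using ((isStarNormal_of_mem_unitary hU).commute_star_right hUV.symm).star_star.symm
  have defect_V := star_mul_self_add_defect_mul_defect hV
  have defect_star_V := star_mul_self_add_defect_mul_defect hV'
  rw [star_star] at defect_star_V
  refine ⟨PiLp 2 (fun _ : Fin (N + 2) ↦ K), inferInstance, inferInstance, inferInstance,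
    (singleIsometry 0).comp W, ampliation U, egervary N V (defect V) (defect (star V)),
    ampliation_mem_unitary hU,
    egervary_mem_unitary (isSelfAdjoint_defect _) (isSelfAdjoint_defect _) defect_V defect_star_V
      (mul_defect hV),
    commute_ampliation_egervary hUV hUV' (hUV.defect hUV') (hUV'.defect (by rwa [star_star])),
    fun n₁ n₂ hn h ↦ ?_⟩
  have hW' : ((singleIsometry 0).comp W).toContinuousLinearMap =
      (singleIsometry (0 : Fin (N + 2))).toContinuousLinearMap ∘L W.toContinuousLinearMap := by
    ext; rfl
  rw [hW', adjoint_comp, comp_apply, mul_apply_eq_comp, adjoint_singleIsometry_apply,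
    ampliation_pow_apply, LinearIsometry.coe_comp, Function.comp_apply, singleIsometry_apply,
    (egervary_pow_single_zero (by omega) _).1, ← mul_apply_eq_comp]
  exact hdil n₁ n₂ hn h

/-- **Commutant lifting gives joint N-dilations.** Let `A, B` be commuting contractions
on a finite-dimensional Hilbert space `H`. Suppose `U` is a unitary `N`-dilation of `A`
on a finite-dimensional space `K`, and `V` is a contraction on `K` commuting with `U`
such that the pair `(U, V)` is an `N`-dilation of `(A, B)`. Then `(A, B)` has a unitary
`N`-dilation on a finite-dimensional space: there are commuting unitaries `U', V'` on a
finite-dimensional `K' ⊇ H` with `A^{n₁} B^{n₂} = P_H U'^{n₁} V'^{n₂} P_H` for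
`n₁ + n₂ ≤ N`. -/
theorem commutant_lifting_gives_unitary_N_dilation
    (H K : Type)
    [NormedAddCommGroup H] [InnerProductSpace ℂ H] [FiniteDimensional ℂ H]
    [NormedAddCommGroup K] [InnerProductSpace ℂ K] [FiniteDimensional ℂ K]
    (A B : H →L[ℂ] H) (hA : ‖A‖ ≤ 1) (hB : ‖B‖ ≤ 1) (hAB : Commute A B)
    (N : ℕ) (W : H →ₗᵢ[ℂ] K)
    (U : K →L[ℂ] K) (hU : U ∈ unitary (K →L[ℂ] K))
    (V : K →L[ℂ] K) (hV : ‖V‖ ≤ 1) (hUV : Commute U V)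
    (hdil : ∀ n₁ n₂ : ℕ, n₁ + n₂ ≤ N →
      ∀ h : H, adjoint W.toContinuousLinearMap ((U ^ n₁ * V ^ n₂) (W h)) = (A ^ n₁ * B ^ n₂) h) :
    ∃ (K' : Type) (_i1 : NormedAddCommGroup K') (_i2 : InnerProductSpace ℂ K')
      (_i3 : FiniteDimensional ℂ K') (W' : H →ₗᵢ[ℂ] K') (U' V' : K' →L[ℂ] K'),
      U' ∈ unitary (K' →L[ℂ] K') ∧ V' ∈ unitary (K' →L[ℂ] K') ∧ Commute U' V' ∧
      ∀ n₁ n₂ : ℕ, n₁ + n₂ ≤ N →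
        ∀ h : H,
          adjoint W'.toContinuousLinearMap ((U' ^ n₁ * V' ^ n₂) (W' h)) =
            (A ^ n₁ * B ^ n₂) h :=
  commutant_lifting_gives_unitary_N_dilation_general H K A B N W U hU V hV hUV hdil
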